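/- arXiv:2106.15924 — 2 statements merged into one kernel-verified Lean document; each statement's English description precedes it below -/
import Mathlib

section
/- If D is a Postnikov diagram of type (k,n) and μ is a perfect matching of the associated bipartite graph Γ(D) (with half-edges), then the boundary value ∂μ ⊆ {1,...,n} has cardinality exactly k. -/
/-!
Every node is covered exactly once by the matching, and every matched edge has exactly one
white and one black endpoint. Counting the nodes of each colour by the element of `μ` covering
them therefore gives `#μE + #(μH ∩ white half-edges) = #white nodes` and likewise for black.
Subtracting the two identities and comparing with the definition of the type `(k,n)` leaves
exactly `#∂μ = k`.
-/

noncomputable section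
open scoped Classical

structure BipartiteGraphWithHalfEdges (n : ℕ) where
  Node : Type
  [fintNode : Fintype Node]
  white : Node → Prop
  Edge : Type
  [fintEdge : Fintype Edge]
  wEnd : Edge → Node
  bEnd : Edge → Node
  wEnd_white : ∀ e, white (wEnd e)
  bEnd_black : ∀ e, ¬ white (bEnd e)
  halfNode : Fin n → Node

attribute [instance] BipartiteGraphWithHalfEdges.fintNode BipartiteGraphWithHalfEdges.fintEdge

namespace BipartiteGraphWithHalfEdges

variable {n : ℕ} (Γ : BipartiteGraphWithHalfEdges n)

def IsPerfectMatching (μE : Finset Γ.Edge) (μH : Finset (Fin n)) : Prop :=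
  ∀ v : Γ.Node,
    ((μE.filter fun e => Γ.wEnd e = v ∨ Γ.bEnd e = v).card
      + (μH.filter fun i => Γ.halfNode i = v).card) = 1

/-- `k = #{white nodes} − #{black nodes} + #{half-edges incident with a black node}`,
written without subtraction. -/
def HasTypeK (k : ℕ) : Prop :=
  Fintype.card {v : Γ.Node // Γ.white v}
      + (Finset.univ.filter fun i : Fin n => ¬ Γ.white (Γ.halfNode i)).card
    = Fintype.card {v : Γ.Node // ¬ Γ.white v} + k

def bval (_μE : Finset Γ.Edge) (μH : Finset (Fin n)) : Finset (Fin n) :=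
  Finset.univ.filter fun i =>
    (Γ.white (Γ.halfNode i) ∧ i ∈ μH) ∨ (¬ Γ.white (Γ.halfNode i) ∧ i ∉ μH)

open Finset

theorem card_bval_add_card_black (μE : Finset Γ.Edge) (μH : Finset (Fin n)) :
    #(Γ.bval μE μH) + #{i ∈ μH | ¬ Γ.white (Γ.halfNode i)}
      = #{i ∈ μH | Γ.white (Γ.halfNode i)} + #{i | ¬ Γ.white (Γ.halfNode i)} := by
  have hbval : Γ.bval μE μH = {i ∈ μH | Γ.white (Γ.halfNode i)}
      ∪ {i ∈ univ.filter fun i => ¬ Γ.white (Γ.halfNode i) | i ∉ μH} := by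
    ext i
    simp only [bval, mem_filter, mem_univ, true_and, mem_union]
    tauto
  have hdisj : Disjoint {i ∈ μH | Γ.white (Γ.halfNode i)}
      {i ∈ univ.filter fun i => ¬ Γ.white (Γ.halfNode i) | i ∉ μH} :=
    disjoint_left.2 fun _ hw hb => (mem_filter.1 hb).2 (mem_filter.1 hw).1
  have hblack : {i ∈ μH | ¬ Γ.white (Γ.halfNode i)}
      = {i ∈ univ.filter fun i => ¬ Γ.white (Γ.halfNode i) | i ∈ μH} := by
    ext i
    simp only [mem_filter, mem_univ, true_and]
    tauto
  rw [hbval, card_union_of_disjoint hdisj, hblack, add_assoc, add_comm #{i ∈ _ | i ∉ μH},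
    card_filter_add_card_filter_not]

section

variable {Γ} {μE : Finset Γ.Edge} {μH : Finset (Fin n)}

theorem IsPerfectMatching.card_add_card_filter_eq_card_subtype
    (hμ : Γ.IsPerfectMatching μE μH) (p : Γ.Node → Prop) [DecidablePred p] (f : Γ.Edge → Γ.Node)
    (hf : ∀ e, p (f e)) (hinc : ∀ e v, p v → (Γ.wEnd e = v ∨ Γ.bEnd e = v ↔ f e = v)) :
    #μE + #{i ∈ μH | p (Γ.halfNode i)} = Fintype.card {v // p v} := by
  set P : Finset Γ.Node := {v | p v}
  have hedges : #μE = ∑ v ∈ P, #{e ∈ μE | f e = v} :=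
    card_eq_sum_card_fiberwise fun e _ => by simpa [P] using hf e
  have hhalf : #{i ∈ μH | p (Γ.halfNode i)} = ∑ v ∈ P, #{i ∈ μH | Γ.halfNode i = v} := by
    simpa [P] using (sum_card_fiberwise_eq_card_filter μH P Γ.halfNode).symm
  calc #μE + #{i ∈ μH | p (Γ.halfNode i)}
      = ∑ v ∈ P, (#{e ∈ μE | f e = v} + #{i ∈ μH | Γ.halfNode i = v}) := by
        rw [sum_add_distrib, hedges, hhalf]
    _ = ∑ v ∈ P, (#{e ∈ μE | Γ.wEnd e = v ∨ Γ.bEnd e = v} + #{i ∈ μH | Γ.halfNode i = v}) := by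
        refine sum_congr rfl fun v hv => ?_
        have hpv : p v := by simpa [P] using hv
        simp only [hinc _ v hpv]
    _ = Fintype.card {v // p v} := by
        rw [sum_congr rfl fun v _ => hμ v, ← card_eq_sum_ones, Fintype.card_subtype]

theorem IsPerfectMatching.card_add_card_white (hμ : Γ.IsPerfectMatching μE μH) :
    #μE + #{i ∈ μH | Γ.white (Γ.halfNode i)} = Fintype.card {v // Γ.white v} :=
  hμ.card_add_card_filter_eq_card_subtype _ Γ.wEnd Γ.wEnd_white fun e _ hv =>
    ⟨fun h => h.resolve_right fun hb => Γ.bEnd_black e (hb ▸ hv), Or.inl⟩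

theorem IsPerfectMatching.card_add_card_black (hμ : Γ.IsPerfectMatching μE μH) :
    #μE + #{i ∈ μH | ¬ Γ.white (Γ.halfNode i)} = Fintype.card {v // ¬ Γ.white v} :=
  hμ.card_add_card_filter_eq_card_subtype (¬ Γ.white ·) Γ.bEnd Γ.bEnd_black fun e _ hv =>
    ⟨fun h => h.resolve_left fun hw => hv (hw ▸ Γ.wEnd_white e), Or.inr⟩

end

/-- If `Γ = Γ(D)` has type `(k,n)` then the boundary value of any perfect matching has
cardinality exactly `k`. -/
theorem bval_card {k : ℕ} (hk : Γ.HasTypeK k)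
    (μE : Finset Γ.Edge) (μH : Finset (Fin n)) (hμ : Γ.IsPerfectMatching μE μH) :
    (Γ.bval μE μH).card = k := by
  have hwhite := hμ.card_add_card_white
  have hblack := hμ.card_add_card_black
  have hbval := Γ.card_bval_add_card_black μE μH
  unfold HasTypeK at hk
  omega

end BipartiteGraphWithHalfEdges

end
end

section
/- Let A be an algebra over Z = C[[t]] which is free and finitely generated as a Z-module, let e be an idempotent of A, set B = eAe, and suppose the canonical inclusion C → B of a Z-subalgebra C is such that C[t⁻¹] = B[t⁻¹]. Then for any B-modules M, N that are free and finitely generated over Z, restriction along C → B gives an isomorphism Hom_C(ρM, ρN) ≅ Hom_B(M, N); that is, the restriction functor ρ: CM(B) → CM(C) is fully faithful. -/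
/-!
STATEMENT 3: Let `A` be an algebra over `Z = ℂ[[t]]` free and finitely generated as a
`Z`-module, `e` an idempotent of `A`, `B = eAe`, and suppose the canonical inclusion
`C → B` of a `Z`-subalgebra `C` satisfies `C[t⁻¹] = B[t⁻¹]`.  Then for any `B`-modules
`M, N` free and finitely generated over `Z`, restriction along `C → B` gives an
isomorphism `Hom_C(ρM, ρN) ≅ Hom_B(M, N)`; i.e. `ρ : CM(B) → CM(C)` is fully faithful.

The corner algebra `B = eAe` is realised via a `Z`-linear multiplicative embedding
`j : B → A` with `j 1 = e` and image `{a | e * a * e = a}`.  Full faithfulness is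
expressed as: every additive map `M → N` commuting with the `C`-action is `B`-linear
(this is exactly surjectivity of the restriction map `Hom_B(M,N) → Hom_C(ρM, ρN)`,
injectivity being trivial since restriction does not change the underlying function).
-/

noncomputable section

abbrev Zc : Type := PowerSeries ℂ
abbrev tZ : Zc := PowerSeries.X

theorem restriction_fully_faithful
    -- the algebra `A`, free and finitely generated over `Z`
    (A : Type) [Ring A] [Algebra Zc A]
    (hAfree : Module.Free Zc A) (hAfin : Module.Finite Zc A)
    -- the idempotent `e`
    (e : A) (he : e * e = e)
    -- the corner algebra `B = eAe`
    (B : Type) [Ring B] [Algebra Zc B]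
    (j : B →ₗ[Zc] A) (hjinj : Function.Injective j)
    (hjmul : ∀ x y : B, j (x * y) = j x * j y) (hjone : j 1 = e)
    (hjrange : Set.range j = {a : A | e * a * e = a})
    -- the canonical `Z`-subalgebra `C` of `B`
    (C : Type) [Ring C] [Algebra Zc C]
    (ι : C →ₐ[Zc] B) (hιinj : Function.Injective ι)
    -- `C[t⁻¹] = B[t⁻¹]` : every element of `B` becomes an element of `C` after
    -- multiplying by a power of `t`
    (hsandwich : ∀ b : B, ∃ (m : ℕ) (c : C), algebraMap Zc B (tZ ^ m) * b = ι c)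
    -- `M` and `N` in `CM(B)`: free and finitely generated over `Z`
    (M N : Type) [AddCommGroup M] [AddCommGroup N]
    [Module B M] [Module B N] [Module Zc M] [Module Zc N]
    [IsScalarTower Zc B M] [IsScalarTower Zc B N]
    (hMfree : Module.Free Zc M) (hMfin : Module.Finite Zc M)
    (hNfree : Module.Free Zc N) (hNfin : Module.Finite Zc N)
    -- an arbitrary `C`-linear map `ρM → ρN` ...
    (f : M →+ N) (hfC : ∀ (c : C) (m : M), f (ι c • m) = ι c • f m) :
    -- ... is automatically `B`-linear, i.e. the restriction map
    -- `Hom_B(M,N) → Hom_C(ρM, ρN)` is bijective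
    ∀ (b : B) (m : M), f (b • m) = b • f m := by
  -- f is automatically Zc-linear, since the Zc-action factors through C
  have hfZ : ∀ (z : Zc) (m : M), f (z • m) = z • f m := by
    intro z m
    have h1 : z • m = ι (algebraMap Zc C z) • m := by
      rw [ι.commutes, algebraMap_smul]
    have h2 : z • f m = ι (algebraMap Zc C z) • f m := by
      rw [ι.commutes, algebraMap_smul]
    rw [h1, h2, hfC]
  intro b m
  obtain ⟨k, c, hc⟩ := hsandwich b
  haveI := hNfree
  -- t^k • (f (b•m)) = t^k • (b • f m)
  have key : (tZ ^ k : Zc) • f (b • m) = (tZ ^ k : Zc) • (b • f m) := by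
    have l1 : (tZ ^ k : Zc) • f (b • m) = f ((tZ ^ k : Zc) • (b • m)) :=
      (hfZ _ _).symm
    have l2 : (tZ ^ k : Zc) • (b • m) = (ι c) • m := by
      rw [← hc, ← smul_eq_mul, smul_assoc, algebraMap_smul]
    have l3 : (tZ ^ k : Zc) • (b • f m) = (ι c) • f m := by
      rw [← hc, ← smul_eq_mul, smul_assoc, algebraMap_smul]
    rw [l1, l2, hfC, l3]
  have htne : (tZ ^ k : Zc) ≠ 0 := pow_ne_zero _ PowerSeries.X_ne_zero
  exact smul_right_injective N htne key

end
end
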